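/- arXiv:math/0601171 — 3 statements merged into one kernel-verified Lean document; each statement's English description precedes it below -/
import Mathlib

section
/- For any skew-Hermitian N×N matrix X that is off-diagonal with respect to the decomposition ℂ^N = ℂ^k ⊕ ℂ^{N−k} (i.e., X ∈ 𝔤(N,k), the orthocomplement of 𝔲(k)⊕𝔲(N−k) in 𝔲(N)), the sum Σ_{1≤i≤k, k+1≤j≤N} (‖[X, E_{ij}]‖_HS² + ‖[X, F_{ij}]‖_HS²) equals N‖X‖_HS², where E_{ij}, F_{ij} are the standard orthonormal basis of 𝔤(N,k). -/
open Matrix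

noncomputable def grassE (N : ℕ) (i j : Fin N) : Matrix (Fin N) (Fin N) ℂ :=
  ((Real.sqrt 2 : ℂ)⁻¹) • (Matrix.single i j 1 - Matrix.single j i 1)

noncomputable def grassF (N : ℕ) (i j : Fin N) : Matrix (Fin N) (Fin N) ℂ :=
  (Complex.I * (Real.sqrt 2 : ℂ)⁻¹) • (Matrix.single i j 1 + Matrix.single j i 1)

/-- Squared Hilbert–Schmidt norm `‖A‖_HS² = Re Tr(A A*)`. -/
noncomputable def hsNormSq {N : ℕ} (A : Matrix (Fin N) (Fin N) ℂ) : ℝ :=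
  ((A * Aᴴ).trace).re

/-- Commutator of matrices. -/
noncomputable def matComm {N : ℕ} (A B : Matrix (Fin N) (Fin N) ℂ) : Matrix (Fin N) (Fin N) ℂ :=
  A * B - B * A

/-!
Write `P = [X, e_ij]` and `Q = [X, e_ji]`. Then `[X, E_ij] = (P - Q)/√2` and
`[X, F_ij] = i (P + Q)/√2`, so by the parallelogram law the pair contributes `‖P‖² + ‖Q‖²`.
The summands `X e_ij` (column `j`) and `e_ij X` (row `i`) of `P` meet only in the entry
`(i, j)`, where they are `X_ii` and `X_jj`. When these vanish, `‖P‖² = c_i + r_j` with `c`, `r`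
the squared column and row norms; for skew-Hermitian `X` we have `r = c`. Each pair thus contributes `2 (c_i + c_j)`, and summing
over `i < k ≤ j` gives `2 ((N - k) Σ_{i<k} c_i + k Σ_{j≥k} c_j)`. Because `X` is block
off-diagonal and `|X_ab| = |X_ba|`, both block sums equal `‖X‖² / 2`.
-/

lemma hsNormSq_eq_sum_normSq {N : ℕ} (A : Matrix (Fin N) (Fin N) ℂ) :
    hsNormSq A = ∑ a, ∑ b, Complex.normSq (A a b) := by
  simp [hsNormSq, Matrix.trace, Matrix.mul_apply, Complex.mul_conj, Complex.re_sum]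

lemma hsNormSq_smul {N : ℕ} (c : ℂ) (A : Matrix (Fin N) (Fin N) ℂ) :
    hsNormSq (c • A) = Complex.normSq c * hsNormSq A := by
  simp only [hsNormSq_eq_sum_normSq, Matrix.smul_apply, smul_eq_mul, Complex.normSq_mul,
    Finset.mul_sum]

lemma hsNormSq_sub_add_hsNormSq_add {N : ℕ} (P Q : Matrix (Fin N) (Fin N) ℂ) :
    hsNormSq (P - Q) + hsNormSq (P + Q) = 2 * (hsNormSq P + hsNormSq Q) := by
  simp only [hsNormSq_eq_sum_normSq, Matrix.sub_apply, Matrix.add_apply, Complex.normSq_sub,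
    Complex.normSq_add, Finset.mul_sum, ← Finset.sum_add_distrib]
  ring_nf

lemma matComm_smul {N : ℕ} (X : Matrix (Fin N) (Fin N) ℂ) (c : ℂ) (B : Matrix (Fin N) (Fin N) ℂ) :
    matComm X (c • B) = c • matComm X B := by
  simp [matComm, smul_sub]

lemma matComm_add {N : ℕ} (X B C : Matrix (Fin N) (Fin N) ℂ) :
    matComm X (B + C) = matComm X B + matComm X C := by
  simp only [matComm, Matrix.mul_add, Matrix.add_mul]; abel

lemma matComm_sub {N : ℕ} (X B C : Matrix (Fin N) (Fin N) ℂ) :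
    matComm X (B - C) = matComm X B - matComm X C := by
  simp only [matComm, Matrix.mul_sub, Matrix.sub_mul]; abel

lemma hsNormSq_matComm_grassE_add_grassF {N : ℕ} (X : Matrix (Fin N) (Fin N) ℂ) (i j : Fin N) :
    hsNormSq (matComm X (grassE N i j)) + hsNormSq (matComm X (grassF N i j)) =
      hsNormSq (matComm X (single i j 1)) + hsNormSq (matComm X (single j i 1)) := by
  have hc : Complex.normSq (Real.sqrt 2 : ℂ)⁻¹ = 1 / 2 := by
    rw [Complex.normSq_inv, Complex.normSq_ofReal, Real.mul_self_sqrt zero_le_two, one_div]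
  rw [grassE, grassF, matComm_smul, matComm_smul, hsNormSq_smul, hsNormSq_smul, matComm_sub,
    matComm_add, Complex.normSq_mul, Complex.normSq_I, one_mul, hc]
  linarith [hsNormSq_sub_add_hsNormSq_add (matComm X (single i j 1)) (matComm X (single j i 1))]

lemma matComm_single_one_apply {N : ℕ} (X : Matrix (Fin N) (Fin N) ℂ) (i j a b : Fin N) :
    matComm X (single i j 1) a b = (if b = j then X a i else 0) - (if a = i then X j b else 0) := by
  by_cases ha : a = i <;> by_cases hb : b = j <;> simp [matComm, ha, hb]

lemma hsNormSq_matComm_single_one {N : ℕ} (X : Matrix (Fin N) (Fin N) ℂ) {i j : Fin N}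
    (hi : X i i = 0) (hj : X j j = 0) :
    hsNormSq (matComm X (single i j 1)) =
      ∑ a, Complex.normSq (X a i) + ∑ b, Complex.normSq (X j b) := by
  have hentry : ∀ a b, Complex.normSq (matComm X (single i j 1) a b) =
      (if b = j then Complex.normSq (X a i) else 0) +
        (if a = i then Complex.normSq (X j b) else 0) := by
    intro a b
    rw [matComm_single_one_apply]
    by_cases ha : a = i <;> by_cases hb : b = j <;> simp [ha, hb, hi, hj]
  simp only [hsNormSq_eq_sum_normSq, hentry, Finset.sum_add_distrib, Finset.sum_ite_eq',
    Finset.mem_univ, if_true]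
  rw [Finset.sum_comm]
  simp

lemma Matrix.normSq_apply_comm_of_conjTranspose_eq_neg {n : Type*} {X : Matrix n n ℂ}
    (hX : Xᴴ = -X) (a b : n) : Complex.normSq (X a b) = Complex.normSq (X b a) := by
  have h : star (X a b) = -X b a := congrFun (congrFun hX b) a
  rw [← Complex.normSq_conj, ← Complex.star_def, h, Complex.normSq_neg]

lemma hsNormSq_matComm_grassE_add_grassF_of_skew {N : ℕ} {X : Matrix (Fin N) (Fin N) ℂ}
    (hX : Xᴴ = -X) {i j : Fin N} (hi : X i i = 0) (hj : X j j = 0) :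
    hsNormSq (matComm X (grassE N i j)) + hsNormSq (matComm X (grassF N i j)) =
      2 * (∑ a, Complex.normSq (X a i) + ∑ a, Complex.normSq (X a j)) := by
  rw [hsNormSq_matComm_grassE_add_grassF, hsNormSq_matComm_single_one X hi hj,
    hsNormSq_matComm_single_one X hj hi]
  simp only [Matrix.normSq_apply_comm_of_conjTranspose_eq_neg hX i,
    Matrix.normSq_apply_comm_of_conjTranspose_eq_neg hX j]
  ring

section Bipartition

open Finset

variable {ι : Type*} [Fintype ι] (p : ι → Prop) [DecidablePred p]

lemma Finset.sum_filter_sum_eq_sum_filter_not_sum {f : ι → ι → ℝ}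
    (hf : ∀ a b, f a b = f b a) (hblock : ∀ a b, (p a ↔ p b) → f a b = 0) :
    ∑ i with p i, ∑ a, f a i = ∑ i with ¬p i, ∑ a, f a i := by
  have hL : ∀ i ∈ ({i | p i} : Finset ι), ∑ a, f a i = ∑ a with ¬p a, f a i := by
    intro i hi
    refine (sum_filter_of_ne fun a _ ha => ?_).symm
    contrapose! ha
    exact hblock a i (by simp_all)
  have hR : ∀ i ∈ ({i | ¬p i} : Finset ι), ∑ a, f a i = ∑ a with p a, f i a := by
    intro i hi
    simp only [hf _ i]
    refine (sum_filter_of_ne fun a _ ha => ?_).symm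
    contrapose! ha
    exact hblock i a (by simp_all)
  rw [sum_congr rfl hL, sum_congr rfl hR, sum_comm]

lemma Finset.sum_sum_ite_and_not {c : ι → ℝ} (hc : ∑ i with p i, c i = ∑ i with ¬p i, c i) :
    ∑ i, ∑ j, (if p i ∧ ¬p j then c i + c j else 0) = Fintype.card ι * ∑ i with p i, c i := by
  have hsplit : ∀ i, ∑ j, (if p i ∧ ¬p j then c i + c j else 0) =
      if p i then ∑ j with ¬p j, (c i + c j) else 0 := by
    intro i
    split_ifs with hi <;> simp [hi, sum_filter]
  calc ∑ i, ∑ j, (if p i ∧ ¬p j then c i + c j else 0)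
      = ∑ i with p i, ∑ j with ¬p j, (c i + c j) := by simp only [hsplit, sum_filter]
    _ = (#{j | ¬p j} + #{i | p i} : ℕ) * ∑ i with p i, c i := by
      simp only [sum_add_distrib, sum_const, nsmul_eq_mul, ← mul_sum, ← hc]
      push_cast
      ring
    _ = Fintype.card ι * ∑ i with p i, c i := by
      rw [add_comm, card_filter_add_card_filter_not, card_univ]

end Bipartition

theorem stmt_3_general (N k : ℕ)
    (X : Matrix (Fin N) (Fin N) ℂ)
    (hskew : Xᴴ = -X)
    (hblock : ∀ i j : Fin N,
      (((i : ℕ) < k ∧ (j : ℕ) < k) ∨ (k ≤ (i : ℕ) ∧ k ≤ (j : ℕ))) → X i j = 0) :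
    (∑ i : Fin N, ∑ j : Fin N,
        if (i : ℕ) < k ∧ k ≤ (j : ℕ) then
          hsNormSq (matComm X (grassE N i j)) + hsNormSq (matComm X (grassF N i j))
        else 0)
      = (N : ℝ) * hsNormSq X := by
  set c : Fin N → ℝ := fun i => ∑ a, Complex.normSq (X a i)
  have hdiag : ∀ i, X i i = 0 := fun i => hblock i i (by omega)
  have hc : ∑ i : Fin N with i.val < k, c i = ∑ i : Fin N with ¬i.val < k, c i :=
    Finset.sum_filter_sum_eq_sum_filter_not_sum (fun i : Fin N => (i : ℕ) < k)
      (Matrix.normSq_apply_comm_of_conjTranspose_eq_neg hskew)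
      fun a b hab => by rw [hblock a b (by rw [← not_lt, ← not_lt]; tauto), Complex.normSq_zero]
  have hX : hsNormSq X = 2 * ∑ i : Fin N with i.val < k, c i := by
    rw [hsNormSq_eq_sum_normSq, Finset.sum_comm,
      ← Finset.sum_filter_add_sum_filter_not _ (fun i : Fin N => (i : ℕ) < k), ← hc, two_mul]
  calc _ = ∑ i : Fin N, ∑ j : Fin N,
        if (i : ℕ) < k ∧ ¬(j : ℕ) < k then 2 * (c i + c j) else 0 := by
        simp only [← not_lt, hsNormSq_matComm_grassE_add_grassF_of_skew hskew (hdiag _) (hdiag _)]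
        rfl
    _ = 2 * ∑ i : Fin N, ∑ j : Fin N, if (i : ℕ) < k ∧ ¬(j : ℕ) < k then c i + c j else 0 := by
        simp only [Finset.mul_sum, mul_ite, mul_zero]
    _ = N * hsNormSq X := by
        rw [Finset.sum_sum_ite_and_not _ hc, Fintype.card_fin, hX]
        ring

/-- for skew-Hermitian `X` with vanishing diagonal blocks relative to
`ℂ^N = ℂ^k ⊕ ℂ^{N−k}`, one has
`Σ_{i<k≤j} (‖[X,E_{ij}]‖² + ‖[X,F_{ij}]‖²) = N ‖X‖²` (Hilbert–Schmidt norms). -/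
theorem stmt_3 (N k : ℕ) (hk : 1 ≤ k) (hkN : k ≤ N - 1)
    (X : Matrix (Fin N) (Fin N) ℂ)
    (hskew : Xᴴ = -X)
    (hblock : ∀ i j : Fin N,
      (((i : ℕ) < k ∧ (j : ℕ) < k) ∨ (k ≤ (i : ℕ) ∧ k ≤ (j : ℕ))) → X i j = 0) :
    (∑ i : Fin N, ∑ j : Fin N,
        if (i : ℕ) < k ∧ k ≤ (j : ℕ) then
          hsNormSq (matComm X (grassE N i j)) + hsNormSq (matComm X (grassF N i j))
        else 0)
      = (N : ℝ) * hsNormSq X :=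
  stmt_3_general N k X hskew hblock
end

section
/- For orthogonal projections P, Q in M_N(ℂ) and any polynomial ψ with real coefficients, the squared Hilbert–Schmidt norm of the commutator-type gradient satisfies ‖P ψ'(PQP) P Q − Q P ψ'(PQP) P‖_HS² = 2 Tr((ψ'(PQP))² PQP(I − PQP)). -/
open Matrix Polynomial

private lemma aeval_comm_self {N : ℕ} (M : Matrix (Fin N) (Fin N) ℂ) (q : Polynomial ℂ) :
    Polynomial.aeval M q * M = M * Polynomial.aeval M q := by
  have h : Polynomial.aeval M (q * X) = Polynomial.aeval M (X * q) := by rw [mul_comm]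
  simpa [_root_.map_mul] using h

private lemma aeval_herm {N : ℕ} (M : Matrix (Fin N) (Fin N) ℂ) (hM : Mᴴ = M)
    (ψ : Polynomial ℝ) :
    (Polynomial.aeval M (ψ.map (algebraMap ℝ ℂ)))ᴴ
      = Polynomial.aeval M (ψ.map (algebraMap ℝ ℂ)) := by
  induction ψ using Polynomial.induction_on' with
  | add p q hp hq =>
      rw [Polynomial.map_add, _root_.map_add, Matrix.conjTranspose_add, hp, hq]
  | monomial n a =>
      simp [Polynomial.map_monomial, Polynomial.aeval_monomial,
        Matrix.conjTranspose_mul, Matrix.conjTranspose_pow, hM,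
        Algebra.algebraMap_eq_smul_one, Matrix.conjTranspose_smul]

/-- for orthogonal projections `P, Q` in `M_N(ℂ)` and a real polynomial `ψ'`
applied to `PQP` by functional calculus (with `D = ψ'(PQP)`),
`‖P·D·P·Q − Q·P·D·P‖_HS² = 2 Tr(D² · PQP · (I − PQP))`. -/
theorem stmt_5 (N : ℕ) (P Q : Matrix (Fin N) (Fin N) ℂ)
    (hP : P * P = P) (hPh : Pᴴ = P) (hQ : Q * Q = Q) (hQh : Qᴴ = Q)
    (ψ' : Polynomial ℝ) :
    letI D : Matrix (Fin N) (Fin N) ℂ :=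
      Polynomial.aeval (P * Q * P) (ψ'.map (algebraMap ℝ ℂ))
    letI X : Matrix (Fin N) (Fin N) ℂ := P * D * P * Q - Q * P * D * P
    ((X * Xᴴ).trace).re = 2 * ((D ^ 2 * (P * Q * P) * (1 - P * Q * P)).trace).re := by
  show (((P * Polynomial.aeval (P * Q * P) (ψ'.map (algebraMap ℝ ℂ)) * P * Q
        - Q * P * Polynomial.aeval (P * Q * P) (ψ'.map (algebraMap ℝ ℂ)) * P)
      * (P * Polynomial.aeval (P * Q * P) (ψ'.map (algebraMap ℝ ℂ)) * P * Q
        - Q * P * Polynomial.aeval (P * Q * P) (ψ'.map (algebraMap ℝ ℂ)) * P)ᴴ).trace).re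
    = 2 * (((Polynomial.aeval (P * Q * P) (ψ'.map (algebraMap ℝ ℂ))) ^ 2
        * (P * Q * P) * (1 - P * Q * P)).trace).re
  set M : Matrix (Fin N) (Fin N) ℂ := P * Q * P with hMdef
  set D : Matrix (Fin N) (Fin N) ℂ := Polynomial.aeval M (ψ'.map (algebraMap ℝ ℂ)) with hDdef
  set E : Matrix (Fin N) (Fin N) ℂ := P * D * P with hEdef
  -- basic facts
  have hMh : Mᴴ = M := by
    rw [hMdef]; simp [Matrix.conjTranspose_mul, hPh, hQh, mul_assoc]
  have hPM : P * M = M := by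
    rw [hMdef]; simp only [← mul_assoc]; rw [hP]
  have hMP : M * P = M := by
    rw [hMdef, mul_assoc, hP]
  have hDM : D * M = M * D := by rw [hDdef]; exact aeval_comm_self M _
  have hDh : Dᴴ = D := by rw [hDdef]; exact aeval_herm M hMh ψ'
  have hPE : P * E = E := by
    rw [hEdef]; simp only [← mul_assoc]; rw [hP]
  have hEP : E * P = E := by
    rw [hEdef, mul_assoc, hP]
  have hEh : Eᴴ = E := by
    rw [hEdef, Matrix.conjTranspose_mul, Matrix.conjTranspose_mul, hPh, hDh,
      ← mul_assoc]
  have hEM : E * M = D * M := by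
    calc E * M = P * D * (P * M) := by rw [hEdef, mul_assoc]
    _ = P * (D * M) := by rw [hPM, mul_assoc]
    _ = P * (M * D) := by rw [hDM]
    _ = P * M * D := by rw [← mul_assoc]
    _ = M * D := by rw [hPM]
    _ = D * M := hDM.symm
  -- rewrite the goal in terms of E
  have hQE : Q * P * D * P = Q * E := by
    rw [hEdef]; simp only [mul_assoc]
  clear_value E D M
  rw [hQE]
  -- conjugate transpose
  have hXh : (E * Q - Q * E)ᴴ = Q * E - E * Q := by
    rw [Matrix.conjTranspose_sub, Matrix.conjTranspose_mul, Matrix.conjTranspose_mul,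
      hEh, hQh]
  rw [hXh]
  -- expand the product
  have expand : (E * Q - Q * E) * (Q * E - E * Q)
      = E * (Q * Q) * E - E * Q * (E * Q) - Q * E * (Q * E) + Q * (E * E) * Q := by
    noncomm_ring
  rw [expand, hQ, Matrix.trace_add, Matrix.trace_sub, Matrix.trace_sub]
  -- key matrix identities
  have G1 : E * Q * E = E * M * E := by
    nth_rewrite 1 [← hEP]
    nth_rewrite 2 [← hPE]
    rw [hMdef]; simp only [mul_assoc]
  have G2 : E * Q * (E * Q) = P * (E * (M * (E * (P * Q)))) := by
    nth_rewrite 1 [← hPE]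
    nth_rewrite 1 [← hEP]
    nth_rewrite 2 [← hPE]
    nth_rewrite 2 [← hEP]
    rw [hMdef]; simp only [mul_assoc]
  -- the four trace identities
  have t1 : (E * Q * E).trace = (D * D * M).trace := by
    rw [G1, Matrix.trace_mul_comm, hEM, hDM, ← mul_assoc, hEM, mul_assoc, ← hDM,
      ← mul_assoc]
  have t2 : (E * Q * (E * Q)).trace = (D * D * (M * M)).trace := by
    rw [G2, Matrix.trace_mul_comm]
    have h1 : E * (M * (E * (P * Q))) * P = E * M * (E * M) := by
      rw [hMdef]; simp only [mul_assoc]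
    rw [h1, hEM]
    have h2 : D * M * (D * M) = D * D * (M * M) := by
      rw [mul_assoc, ← mul_assoc M D M, ← hDM]; simp only [mul_assoc]
    rw [h2]
  have t3 : (Q * E * (Q * E)).trace = (D * D * (M * M)).trace := by
    have h1 : Q * E * (Q * E) = Q * (E * (Q * E)) := by simp only [mul_assoc]
    rw [h1, Matrix.trace_mul_comm]
    have h2 : E * (Q * E) * Q = E * Q * (E * Q) := by simp only [mul_assoc]
    rw [h2, t2]
  have t4 : (Q * (E * E) * Q).trace = (D * D * M).trace := by
    have h1 : Q * (E * E) * Q = Q * (E * E * Q) := by simp only [mul_assoc]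
    rw [h1, Matrix.trace_mul_comm]
    have h2 : E * E * Q * Q = E * (E * Q) := by rw [mul_assoc (E * E) Q Q, hQ, mul_assoc]
    rw [h2, Matrix.trace_mul_comm]
    have h3 : E * Q * E = E * Q * E := rfl
    rw [t1]
  rw [t1, t2, t3, t4]
  -- right-hand side
  have hR : (D ^ 2 * M * (1 - M)).trace = (D * D * M).trace - (D * D * (M * M)).trace := by
    rw [mul_sub, mul_one, Matrix.trace_sub, sq, mul_assoc (D * D) M M]
  rw [hR]
  simp only [Complex.sub_re, Complex.add_re]
  ring
end

section
/- Symmetrization identity for the logarithmic kernel: for a finite measure ν on (0,1) with density f and any n ≥ 1, ∬ ((x₁^{n+1} − x₂^{n+1})/(x₁ − x₂) − (x₁^n − x₂^n)/(x₁ − x₂)) dν(x₁) dν(x₂) = −2 ∫₀¹ x^{n−1} (Hf)(x) f(x) x(1−x) dx, where Hf is the Hilbert transform (principal value) of f, assuming f ∈ L³((0,1), x(1−x)dx) so that Hf exists and H_ε f → Hf in the weighted L³ norm. -/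
open MeasureTheory Set Filter Topology

/-!
With `p x = x ^ (n - 1) * (x * (1 - x))` the kernel is `-(p x₁ - p x₂) / (x₁ - x₂)`. Off the
diagonal `(p x - p y) / (x - y) * f x * f y = p x f x * f y / (x - y) + p y f y * f x / (y - x)`,
so once the strip `|x - y| ≤ ε` is cut out, Fubini and the symmetry `x ↔ y` turn the double
integral into `2 ∫ p f H_ε f`. As `ε → 0` the left side converges by dominated convergence, the
difference quotients of the `C¹` function `p` being bounded on `[0, 1]`. On the right,
`|p| ≤ x (1 - x)` and the AM–GM inequality `a b ≤ a³ / t² + t (b³ + 1)` bound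
`|∫ p f (H_ε f - Hf)|` by `‖H_ε f - Hf‖³ / t² + C t` in `L³((0,1), x (1 - x) dx)`, which is
small for `t` small and then `ε` small.
-/

/-- Truncated Hilbert transform on `(0,1)`:
`(H_ε f)(x) = ∫_{t ∈ (0,1), |x−t| > ε} f(t)/(x−t) dt`. -/
noncomputable def truncHilbert (f : ℝ → ℝ) (ε x : ℝ) : ℝ :=
  ∫ t in Set.Ioo (0:ℝ) 1, if ε < |x - t| then f t / (x - t) else 0

local notation "μ₀" => volume.restrict (Ioo (0:ℝ) 1)

lemma abs_div_sub_le_of_lipschitzOnWith {p : ℝ → ℝ} {K : NNReal} {s : Set ℝ}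
    (hp : LipschitzOnWith K p s) {x y : ℝ} (hx : x ∈ s) (hy : y ∈ s) :
    |(p x - p y) / (x - y)| ≤ K := by
  rw [abs_div]
  exact div_le_of_le_mul₀ (abs_nonneg _) K.coe_nonneg (hp.dist_le_mul x hx y hy)

lemma ae_fst_ne_snd (μ ν : Measure ℝ) [SFinite ν] [NullSingletonClass ν] :
    ∀ᵐ z ∂μ.prod ν, z.1 ≠ z.2 := by
  refine (Measure.ae_prod_iff_ae_ae measurableSet_diagonal.compl).2
    (Eventually.of_forall fun x => ?_)
  filter_upwards [ν.ae_ne x] with y hy using Ne.symm hy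

lemma ae_mem_Ioo_prod : ∀ᵐ z ∂Measure.prod μ₀ μ₀, z.1 ∈ Ioo (0:ℝ) 1 ∧ z.2 ∈ Ioo (0:ℝ) 1 := by
  rw [Measure.prod_restrict]
  exact ae_restrict_mem (measurableSet_Ioo.prod measurableSet_Ioo)

lemma abs_truncKernel_le (f : ℝ → ℝ) {ε : ℝ} (hε : 0 < ε) (x t : ℝ) :
    |if ε < |x - t| then f t / (x - t) else 0| ≤ ε⁻¹ * |f t| := by
  split_ifs with h
  · rw [abs_div, div_eq_mul_inv, mul_comm]
    exact mul_le_mul_of_nonneg_right (inv_anti₀ hε h.le) (abs_nonneg _)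
  · simp only [abs_zero]; positivity

lemma measurable_truncKernel {f : ℝ → ℝ} (hf : Measurable f) (ε : ℝ) :
    Measurable fun z : ℝ × ℝ => if ε < |z.1 - z.2| then f z.2 / (z.1 - z.2) else 0 :=
  Measurable.ite (measurableSet_lt measurable_const (by fun_prop)) (by fun_prop) measurable_const

lemma measurable_truncHilbert {f : ℝ → ℝ} (hf : Measurable f) (ε : ℝ) :
    Measurable (truncHilbert f ε) :=
  (measurable_truncKernel hf ε).stronglyMeasurable.integral_prod_right.measurable

lemma abs_truncHilbert_le {f : ℝ → ℝ} (hf : IntegrableOn f (Ioo 0 1)) {ε : ℝ} (hε : 0 < ε)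
    (x : ℝ) : |truncHilbert f ε x| ≤ ε⁻¹ * ∫ t in Ioo 0 1, |f t| := by
  rw [← integral_const_mul]
  exact norm_integral_le_of_norm_le (f := fun t => if ε < |x - t| then f t / (x - t) else 0)
    (hf.abs.const_mul _) (Eventually.of_forall fun t => abs_truncKernel_le f hε x t)

lemma integrable_prod_mul_truncKernel {f g : ℝ → ℝ} (hf : Measurable f)
    (hfi : IntegrableOn f (Ioo 0 1)) (hg : IntegrableOn g (Ioo 0 1)) {ε : ℝ} (hε : 0 < ε) :
    Integrable (fun z : ℝ × ℝ => g z.1 * (if ε < |z.1 - z.2| then f z.2 / (z.1 - z.2) else 0))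
      (Measure.prod μ₀ μ₀) := by
  refine Integrable.mono' ((hg.norm.mul_prod hfi.norm).const_mul ε⁻¹)
    (hg.aestronglyMeasurable.comp_fst.mul (measurable_truncKernel hf ε).aestronglyMeasurable)
    (Eventually.of_forall fun z => ?_)
  calc ‖g z.1 * _‖ ≤ ‖g z.1‖ * (ε⁻¹ * |f z.2|) := by
        rw [norm_mul]; gcongr; exact abs_truncKernel_le f hε _ _
    _ = ε⁻¹ * (‖g z.1‖ * ‖f z.2‖) := by rw [Real.norm_eq_abs (f z.2)]; ring

theorem integral_integral_truncated_slope_mul {p f : ℝ → ℝ} (hf : Measurable f)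
    (hfi : IntegrableOn f (Ioo 0 1)) (hpf : IntegrableOn (fun x => p x * f x) (Ioo 0 1))
    {ε : ℝ} (hε : 0 < ε) :
    ∫ x in Ioo 0 1, ∫ y in Ioo 0 1,
        (if ε < |x - y| then (p x - p y) / (x - y) else 0) * f x * f y
      = 2 * ∫ x in Ioo 0 1, p x * f x * truncHilbert f ε x := by
  set A : ℝ × ℝ → ℝ := fun z =>
    p z.1 * f z.1 * (if ε < |z.1 - z.2| then f z.2 / (z.1 - z.2) else 0) with hA_def
  have hA : Integrable A (Measure.prod μ₀ μ₀) := integrable_prod_mul_truncKernel hf hfi hpf hε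
  have hAs : Integrable (fun z => A z.swap) (Measure.prod μ₀ μ₀) := hA.swap
  have hsplit : ∀ x y, (if ε < |x - y| then (p x - p y) / (x - y) else 0) * f x * f y
      = A (x, y) + A (x, y).swap := by
    intro x y
    simp only [hA_def, Prod.swap, abs_sub_comm y x]
    split_ifs with h
    · have hxy : x - y ≠ 0 := fun h0 => by simp [h0] at h; linarith
      have hyx : y - x ≠ 0 := fun h0 => hxy (by linarith)
      field_simp
      ring
    · simp
  calc ∫ x in Ioo 0 1, ∫ y in Ioo 0 1,
          (if ε < |x - y| then (p x - p y) / (x - y) else 0) * f x * f y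
      = ∫ z, A z + A z.swap ∂Measure.prod μ₀ μ₀ := by
        simp_rw [hsplit]
        exact integral_integral (f := fun x y => A (x, y) + A (x, y).swap) (hA.add hAs)
    _ = 2 * ∫ z, A z ∂Measure.prod μ₀ μ₀ := by
        rw [integral_add hA hAs, integral_prod_swap A]; ring
    _ = 2 * ∫ x in Ioo 0 1, p x * f x * truncHilbert f ε x := by
        rw [← integral_integral (f := fun x y => A (x, y)) hA]
        simp only [hA_def, integral_const_mul, truncHilbert]

theorem tendsto_integral_integral_truncated {K : ℝ → ℝ → ℝ} {f : ℝ → ℝ} {C : ℝ}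
    (hK : Measurable (Function.uncurry K))
    (hKC : ∀ x ∈ Ioo (0:ℝ) 1, ∀ y ∈ Ioo (0:ℝ) 1, |K x y| ≤ C) (hf : IntegrableOn f (Ioo 0 1)) :
    Tendsto (fun ε => ∫ x in Ioo 0 1, ∫ y in Ioo 0 1,
        (if ε < |x - y| then K x y else 0) * f x * f y) (𝓝[>] 0)
      (𝓝 (∫ x in Ioo 0 1, ∫ y in Ioo 0 1, K x y * f x * f y)) := by
  set ν := Measure.prod μ₀ μ₀
  set Kε : ℝ → ℝ × ℝ → ℝ := fun ε z => if ε < |z.1 - z.2| then K z.1 z.2 else 0 with hKε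
  have hKε_meas : ∀ ε, Measurable (Kε ε) := fun ε =>
    Measurable.ite (measurableSet_lt measurable_const (by fun_prop)) hK measurable_const
  have hKε_le : ∀ ε z, |Kε ε z| ≤ |K z.1 z.2| := fun ε z => by
    simp only [hKε]; split_ifs <;> simp
  have hbound : Integrable (fun z : ℝ × ℝ => C * (|f z.1| * |f z.2|)) ν :=
    (hf.abs.mul_prod hf.abs).const_mul C
  have hdom : ∀ k : ℝ × ℝ → ℝ, (∀ z, |k z| ≤ |K z.1 z.2|) →
      ∀ᵐ z ∂ν, ‖k z * f z.1 * f z.2‖ ≤ C * (|f z.1| * |f z.2|) := by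
    intro k hk
    filter_upwards [ae_mem_Ioo_prod] with z ⟨hx, hy⟩
    rw [norm_mul, norm_mul, mul_assoc]
    exact mul_le_mul_of_nonneg_right ((hk z).trans (hKC _ hx _ hy)) (by positivity)
  have hmeas : ∀ k : ℝ × ℝ → ℝ, Measurable k →
      AEStronglyMeasurable (fun z => k z * f z.1 * f z.2) ν := fun k hk =>
    (hk.aestronglyMeasurable.mul hf.aestronglyMeasurable.comp_fst).mul
      hf.aestronglyMeasurable.comp_snd
  rw [integral_integral (f := fun x y => K x y * f x * f y)
    (hbound.mono' (hmeas _ hK) (hdom _ fun _ => le_rfl))]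
  refine (tendsto_integral_filter_of_dominated_convergence _
    (Eventually.of_forall fun ε => hmeas _ (hKε_meas ε))
    (Eventually.of_forall fun ε => hdom _ (hKε_le ε)) hbound ?_).congr fun ε =>
      (integral_integral (f := fun x y => Kε ε (x, y) * f x * f y)
        (hbound.mono' (hmeas _ (hKε_meas ε)) (hdom _ (hKε_le ε)))).symm
  filter_upwards [ae_fst_ne_snd μ₀ μ₀] with z hz
  refine tendsto_const_nhds.congr' ?_
  filter_upwards [nhdsWithin_le_nhds (eventually_lt_nhds (abs_pos.2 (sub_ne_zero.2 hz)))]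
    with ε hε
  simp only [hKε, if_pos hε]

lemma tendsto_integral_integral_truncated_slope {p f : ℝ → ℝ} (hp : ContDiffOn ℝ 1 p (Icc 0 1))
    (hpm : Measurable p) (hf : IntegrableOn f (Ioo 0 1)) :
    Tendsto (fun ε => ∫ x in Ioo 0 1, ∫ y in Ioo 0 1,
        (if ε < |x - y| then (p x - p y) / (x - y) else 0) * f x * f y) (𝓝[>] 0)
      (𝓝 (∫ x in Ioo 0 1, ∫ y in Ioo 0 1, (p x - p y) / (x - y) * f x * f y)) := by
  obtain ⟨K, hK⟩ := hp.exists_lipschitzOnWith one_ne_zero (convex_Icc 0 1) isCompact_Icc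
  exact tendsto_integral_integral_truncated (by fun_prop) (fun x hx y hy =>
    abs_div_sub_le_of_lipschitzOnWith hK (Ioo_subset_Icc_self hx) (Ioo_subset_Icc_self hy)) hf

theorem integral_integral_slope_mul_eq_of_tendsto {p f : ℝ → ℝ} {L : ℝ}
    (hp : ContDiffOn ℝ 1 p (Icc 0 1)) (hpm : Measurable p) (hf : Measurable f)
    (hfi : IntegrableOn f (Ioo 0 1)) (hpf : IntegrableOn (fun x => p x * f x) (Ioo 0 1))
    (hL : Tendsto (fun ε => ∫ x in Ioo 0 1, p x * f x * truncHilbert f ε x) (𝓝[>] 0) (𝓝 L)) :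
    ∫ x in Ioo 0 1, ∫ y in Ioo 0 1, (p x - p y) / (x - y) * f x * f y = 2 * L :=
  tendsto_nhds_unique (tendsto_integral_integral_truncated_slope hp hpm hfi) <|
    (hL.const_mul 2).congr' <| eventually_mem_nhdsWithin.mono fun _ hε =>
      (integral_integral_truncated_slope_mul hf hfi hpf hε).symm

lemma mul_mul_le_cube_add_cube_add_cube {x y z : ℝ} (hx : 0 ≤ x) (hy : 0 ≤ y) (hz : 0 ≤ z) :
    3 * (x * y * z) ≤ x ^ 3 + y ^ 3 + z ^ 3 := by
  nlinarith [mul_nonneg (add_nonneg (add_nonneg hx hy) hz)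
    (add_nonneg (add_nonneg (sq_nonneg (x - y)) (sq_nonneg (y - z))) (sq_nonneg (z - x)))]

lemma mul_le_cube_div_sq_add {a b t : ℝ} (ha : 0 ≤ a) (hb : 0 ≤ b) (ht : 0 < t) :
    a * b ≤ a ^ 3 / t ^ 2 + t * (b ^ 3 + 1) := by
  have h := mul_mul_le_cube_add_cube_add_cube ha (mul_nonneg ht.le hb) ht.le
  rw [div_add' _ _ _ (by positivity), le_div_iff₀ (by positivity)]
  nlinarith [mul_nonneg ha hb, pow_pos ht 3]

lemma abs_sub_pow_three_le (a b : ℝ) : |a - b| ^ 3 ≤ 4 * (|a| ^ 3 + |b| ^ 3) :=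
  (pow_le_pow_left₀ (abs_nonneg _) (abs_sub a b) 3).trans
    ((add_pow_le (abs_nonneg a) (abs_nonneg b) 3).trans_eq (by norm_num))

lemma abs_mul_mul_le_of_nonneg {f g w t : ℝ} (hw : 0 ≤ w) (ht : 0 < t) :
    |f * g * w| ≤ |g| ^ 3 * w / t ^ 2 + t * (|f| ^ 3 * w + w) := by
  rw [abs_mul, abs_mul, abs_of_nonneg hw, mul_comm |f|]
  calc |g| * |f| * w ≤ (|g| ^ 3 / t ^ 2 + t * (|f| ^ 3 + 1)) * w :=
        mul_le_mul_of_nonneg_right (mul_le_cube_div_sq_add (abs_nonneg _) (abs_nonneg _) ht) hw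
    _ = _ := by ring

section Weighted

variable {α : Type*} [MeasurableSpace α] {μ : Measure α} {w F G : α → ℝ}
  (hw₀ : 0 ≤ᵐ[μ] w) (hw : Integrable w μ) (hF₃ : Integrable (fun x => |F x| ^ 3 * w x) μ)
include hw₀ hw hF₃

lemma integrable_mul_mul_weight (hF : AEStronglyMeasurable F μ) (hG : AEStronglyMeasurable G μ)
    (hG₃ : Integrable (fun x => |G x| ^ 3 * w x) μ) :
    Integrable (fun x => F x * G x * w x) μ := by
  have hbound : Integrable (fun x => |G x| ^ 3 * w x / 1 ^ 2 + 1 * (|F x| ^ 3 * w x + w x)) μ :=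
    (hG₃.div_const _).add ((hF₃.add hw).const_mul 1)
  refine hbound.mono' ((hF.mul hG).mul hw.aestronglyMeasurable) ?_
  filter_upwards [hw₀] with x hx using abs_mul_mul_le_of_nonneg hx one_pos

lemma abs_integral_mul_mul_weight_le (hG₃ : Integrable (fun x => |G x| ^ 3 * w x) μ) {t : ℝ}
    (ht : 0 < t) :
    |∫ x, F x * G x * w x ∂μ|
      ≤ (∫ x, |G x| ^ 3 * w x ∂μ) / t ^ 2 + t * ((∫ x, |F x| ^ 3 * w x ∂μ) + ∫ x, w x ∂μ) := by
  have h₁ : Integrable (fun x => |G x| ^ 3 * w x / t ^ 2) μ := hG₃.div_const _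
  have h₂ : Integrable (fun x => t * (|F x| ^ 3 * w x + w x)) μ := (hF₃.add hw).const_mul t
  calc |∫ x, F x * G x * w x ∂μ|
      ≤ ∫ x, |G x| ^ 3 * w x / t ^ 2 + t * (|F x| ^ 3 * w x + w x) ∂μ :=
        norm_integral_le_of_norm_le (f := fun x => F x * G x * w x) (h₁.add h₂)
          (by filter_upwards [hw₀] with x hx using abs_mul_mul_le_of_nonneg hx ht)
    _ = _ := by
        rw [integral_add h₁ h₂, integral_div, integral_const_mul, integral_add hF₃ hw]

theorem tendsto_integral_mul_mul_weight_zero {ι : Type*} {l : Filter ι} {Gᵢ : ι → α → ℝ}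
    (hGᵢ₃ : ∀ᶠ i in l, Integrable (fun x => |Gᵢ i x| ^ 3 * w x) μ)
    (hlim : Tendsto (fun i => ∫ x, |Gᵢ i x| ^ 3 * w x ∂μ) l (𝓝 0)) :
    Tendsto (fun i => ∫ x, F x * Gᵢ i x * w x ∂μ) l (𝓝 0) := by
  set C := (∫ x, |F x| ^ 3 * w x ∂μ) + ∫ x, w x ∂μ
  have hC : 0 ≤ C := add_nonneg
    (integral_nonneg_of_ae (by filter_upwards [hw₀] with x hx using mul_nonneg (by positivity) hx))
    (integral_nonneg_of_ae hw₀)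
  rw [Metric.tendsto_nhds]
  intro δ hδ
  set t := δ / (2 * (C + 1))
  have ht : 0 < t := by positivity
  have htC : t * C < δ / 2 := by
    rw [div_mul_eq_mul_div, div_lt_div_iff₀ (by positivity) two_pos]
    nlinarith
  filter_upwards [hGᵢ₃, hlim.eventually (eventually_lt_nhds (by positivity : 0 < δ / 2 * t ^ 2))]
    with i hi hE
  rw [Real.dist_eq, sub_zero]
  calc |∫ x, F x * Gᵢ i x * w x ∂μ| ≤ (∫ x, |Gᵢ i x| ^ 3 * w x ∂μ) / t ^ 2 + t * C :=
        abs_integral_mul_mul_weight_le hw₀ hw hF₃ hi ht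
    _ < δ / 2 + δ / 2 := add_lt_add ((div_lt_iff₀ (by positivity)).2 hE) htC
    _ = δ := add_halves δ

theorem tendsto_integral_mul_mul_weight (hF : AEStronglyMeasurable F μ) {ι : Type*}
    {l : Filter ι} {Gᵢ : ι → α → ℝ} (hG : AEStronglyMeasurable G μ)
    (hG₃ : Integrable (fun x => |G x| ^ 3 * w x) μ)
    (hGᵢ : ∀ᶠ i in l, AEStronglyMeasurable (Gᵢ i) μ)
    (hGᵢ₃ : ∀ᶠ i in l, Integrable (fun x => |Gᵢ i x| ^ 3 * w x) μ)
    (hlim : Tendsto (fun i => ∫ x, |Gᵢ i x - G x| ^ 3 * w x ∂μ) l (𝓝 0)) :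
    Tendsto (fun i => ∫ x, F x * Gᵢ i x * w x ∂μ) l (𝓝 (∫ x, F x * G x * w x ∂μ)) := by
  have hdiff₃ : ∀ᶠ i in l, Integrable (fun x => |Gᵢ i x - G x| ^ 3 * w x) μ := by
    filter_upwards [hGᵢ, hGᵢ₃] with i hm hi
    have hwm := hw.aestronglyMeasurable
    refine ((hi.add hG₃).const_mul 4).mono' (by fun_prop) ?_
    filter_upwards [hw₀] with x hx
    rw [Real.norm_eq_abs, abs_of_nonneg (mul_nonneg (by positivity) hx)]
    calc |Gᵢ i x - G x| ^ 3 * w x ≤ 4 * (|Gᵢ i x| ^ 3 + |G x| ^ 3) * w x :=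
          mul_le_mul_of_nonneg_right (abs_sub_pow_three_le _ _) hx
      _ = 4 * (|Gᵢ i x| ^ 3 * w x + |G x| ^ 3 * w x) := by ring
  have hsum := (tendsto_integral_mul_mul_weight_zero hw₀ hw hF₃ hdiff₃ hlim).add_const
    (∫ x, F x * G x * w x ∂μ)
  rw [zero_add] at hsum
  refine hsum.congr' ?_
  filter_upwards [hGᵢ, hdiff₃] with i hm hi
  have hdiff : Integrable (fun x => F x * (Gᵢ i x - G x) * w x) μ :=
    integrable_mul_mul_weight hw₀ hw hF₃ hF (hm.sub hG) hi
  rw [← integral_add hdiff (integrable_mul_mul_weight hw₀ hw hF₃ hF hG hG₃)]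
  congr 1 with x
  ring

end Weighted

lemma ae_nonneg_weight : 0 ≤ᵐ[μ₀] fun x : ℝ => x * (1 - x) := by
  filter_upwards [ae_restrict_mem measurableSet_Ioo] with x hx
  exact mul_nonneg hx.1.le (by linarith [hx.2])

lemma integrableOn_weight : IntegrableOn (fun x : ℝ => x * (1 - x)) (Ioo 0 1) :=
  (by fun_prop : Continuous fun x : ℝ => x * (1 - x)).integrableOn_Icc.mono_set Ioo_subset_Icc_self

lemma aestronglyMeasurable_of_tendsto_truncHilbert {f Hf : ℝ → ℝ} (hf : Measurable f)
    (h_ae : ∀ᵐ x ∂μ₀, Tendsto (fun ε => truncHilbert f ε x) (𝓝[>] 0) (𝓝 (Hf x))) :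
    AEStronglyMeasurable Hf μ₀ :=
  (aemeasurable_of_tendsto_metrizable_ae _
    (fun ε => (measurable_truncHilbert hf ε).aemeasurable) h_ae).aestronglyMeasurable

lemma integrable_cube_truncHilbert_mul {f w : ℝ → ℝ} (hf : Measurable f)
    (hfi : IntegrableOn f (Ioo 0 1)) (hw : IntegrableOn w (Ioo 0 1)) {ε : ℝ} (hε : 0 < ε) :
    IntegrableOn (fun x => |truncHilbert f ε x| ^ 3 * w x) (Ioo 0 1) :=
  hw.bdd_mul (c := (ε⁻¹ * ∫ t in Ioo 0 1, |f t|) ^ 3)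
    ((measurable_truncHilbert hf ε).abs.pow_const 3).aestronglyMeasurable <|
    Eventually.of_forall fun x => by
      rw [Real.norm_eq_abs, abs_pow, abs_abs]
      exact pow_le_pow_left₀ (abs_nonneg _) (abs_truncHilbert_le hfi hε x) 3

theorem tendsto_integral_mul_truncHilbert_mul_weight {f Hf F : ℝ → ℝ} (hf : Measurable f)
    (hfi : IntegrableOn f (Ioo 0 1)) (hF : AEStronglyMeasurable F μ₀)
    (hF₃ : IntegrableOn (fun x => |F x| ^ 3 * (x * (1 - x))) (Ioo 0 1))
    (hHf₃ : IntegrableOn (fun x => |Hf x| ^ 3 * (x * (1 - x))) (Ioo 0 1))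
    (h_ae : ∀ᵐ x ∂μ₀, Tendsto (fun ε => truncHilbert f ε x) (𝓝[>] 0) (𝓝 (Hf x)))
    (h_L3 : Tendsto (fun ε => ∫ x in Ioo 0 1, |truncHilbert f ε x - Hf x| ^ 3 * (x * (1 - x)))
      (𝓝[>] 0) (𝓝 0)) :
    Tendsto (fun ε => ∫ x in Ioo 0 1, F x * truncHilbert f ε x * (x * (1 - x))) (𝓝[>] 0)
      (𝓝 (∫ x in Ioo 0 1, F x * Hf x * (x * (1 - x)))) :=
  tendsto_integral_mul_mul_weight ae_nonneg_weight integrableOn_weight hF₃ hF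
    (aestronglyMeasurable_of_tendsto_truncHilbert hf h_ae) hHf₃
    (Eventually.of_forall fun ε => (measurable_truncHilbert hf ε).aestronglyMeasurable)
    (eventually_mem_nhdsWithin.mono fun _ hε =>
      integrable_cube_truncHilbert_mul hf hfi integrableOn_weight hε) h_L3

lemma pow_mul_weight_mem_Icc {x : ℝ} (hx : x ∈ Ioo (0:ℝ) 1) (m : ℕ) :
    x ^ m * (x * (1 - x)) ∈ Icc 0 1 := by
  obtain ⟨hx₀, hx₁⟩ := hx
  have hxm : x ^ m ≤ 1 := pow_le_one₀ hx₀.le hx₁.le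
  have hw₀ : 0 ≤ x * (1 - x) := mul_nonneg hx₀.le (by linarith)
  exact ⟨mul_nonneg (pow_pos hx₀ m).le hw₀, mul_le_one₀ hxm hw₀ (by nlinarith)⟩

lemma integrableOn_pow_mul_weight_mul {f : ℝ → ℝ} (m : ℕ) (hf : IntegrableOn f (Ioo 0 1)) :
    IntegrableOn (fun x => x ^ m * (x * (1 - x)) * f x) (Ioo 0 1) := by
  refine hf.bdd_mul (c := 1) (by fun_prop) ?_
  filter_upwards [ae_restrict_mem measurableSet_Ioo] with x hx
  obtain ⟨h₀, h₁⟩ := pow_mul_weight_mem_Icc hx m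
  rwa [Real.norm_eq_abs, abs_of_nonneg h₀]

lemma integrableOn_cube_pow_mul_mul_weight {f : ℝ → ℝ} (m : ℕ) (hf : Measurable f)
    (hf₃ : IntegrableOn (fun x => |f x| ^ 3 * (x * (1 - x))) (Ioo 0 1)) :
    IntegrableOn (fun x => |x ^ m * f x| ^ 3 * (x * (1 - x))) (Ioo 0 1) := by
  refine hf₃.mono' (by fun_prop) ?_
  filter_upwards [ae_restrict_mem measurableSet_Ioo, ae_nonneg_weight] with x hx hw
  have hxm : |x ^ m| ^ 3 ≤ 1 := pow_le_one₀ (abs_nonneg _) <| by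
    rw [abs_of_pos (pow_pos hx.1 m)]; exact pow_le_one₀ hx.1.le hx.2.le
  rw [Real.norm_eq_abs, abs_of_nonneg (mul_nonneg (by positivity) hw), abs_mul, mul_pow, mul_assoc]
  exact mul_le_of_le_one_left (mul_nonneg (by positivity) hw) hxm

theorem stmt_11_general (f Hf : ℝ → ℝ) (n : ℕ) (hn : 1 ≤ n)
    (hf_meas : Measurable f)
    (hf_int : IntegrableOn f (Set.Ioo 0 1) volume)
    (hf_L3 : IntegrableOn (fun x => |f x| ^ (3:ℕ) * (x * (1 - x))) (Set.Ioo 0 1) volume)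
    (hHf_L3 : IntegrableOn (fun x => |Hf x| ^ (3:ℕ) * (x * (1 - x))) (Set.Ioo 0 1) volume)
    (h_ae : ∀ᵐ x ∂(volume.restrict (Set.Ioo (0:ℝ) 1)),
      Tendsto (fun ε => truncHilbert f ε x) (nhdsWithin 0 (Set.Ioi 0)) (nhds (Hf x)))
    (h_L3conv : Tendsto
      (fun ε => ∫ x in Set.Ioo (0:ℝ) 1, |truncHilbert f ε x - Hf x| ^ (3:ℕ) * (x * (1 - x)))
      (nhdsWithin 0 (Set.Ioi 0)) (nhds 0)) :
    (∫ x₁ in Set.Ioo (0:ℝ) 1, ∫ x₂ in Set.Ioo (0:ℝ) 1,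
        ((x₁ ^ (n + 1) - x₂ ^ (n + 1)) / (x₁ - x₂)
          - (x₁ ^ n - x₂ ^ n) / (x₁ - x₂)) * f x₁ * f x₂)
      = -2 * ∫ x in Set.Ioo (0:ℝ) 1, x ^ (n - 1) * Hf x * f x * (x * (1 - x)) := by
  obtain ⟨m, rfl⟩ : ∃ m, n = m + 1 := ⟨n - 1, by omega⟩
  set p : ℝ → ℝ := fun x => x ^ m * (x * (1 - x))
  have hkernel : ∀ x y : ℝ, (x ^ (m + 1 + 1) - y ^ (m + 1 + 1)) / (x - y)
      - (x ^ (m + 1) - y ^ (m + 1)) / (x - y) = -((p x - p y) / (x - y)) := fun x y => by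
    rw [← sub_div, ← neg_div]
    ring
  have hlim := tendsto_integral_mul_truncHilbert_mul_weight hf_meas hf_int (by fun_prop)
    (integrableOn_cube_pow_mul_mul_weight m hf_meas hf_L3) hHf_L3 h_ae h_L3conv
  have hslope := integral_integral_slope_mul_eq_of_tendsto (p := p) (by fun_prop) (by fun_prop)
    hf_meas hf_int (integrableOn_pow_mul_weight_mul m hf_int)
    (hlim.congr fun ε => by congr 1 with x; ring)
  simp only [hkernel, neg_mul, integral_neg, hslope, Nat.add_sub_cancel]
  congr 3 with x
  ring

/-- symmetrization identity for the logarithmic kernel. If `ν` is the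
measure on `(0,1)` with density `f ∈ L³((0,1), x(1−x)dx)` and the truncated Hilbert
transforms `H_ε f` converge (a.e. and in the weighted `L³` norm) to `Hf`, then for
every `n ≥ 1`,
`∬ ((x₁^{n+1}−x₂^{n+1})/(x₁−x₂) − (x₁^n−x₂^n)/(x₁−x₂)) dν(x₁)dν(x₂)
   = −2 ∫₀¹ x^{n−1} (Hf)(x) f(x) x(1−x) dx`. -/
theorem stmt_11 (f Hf : ℝ → ℝ) (n : ℕ) (hn : 1 ≤ n)
    (hf_meas : Measurable f) (hf_nonneg : ∀ x ∈ Set.Ioo (0:ℝ) 1, 0 ≤ f x)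
    (hf_int : IntegrableOn f (Set.Ioo 0 1) volume)
    (hf_L3 : IntegrableOn (fun x => |f x| ^ (3:ℕ) * (x * (1 - x))) (Set.Ioo 0 1) volume)
    (hHf_L3 : IntegrableOn (fun x => |Hf x| ^ (3:ℕ) * (x * (1 - x))) (Set.Ioo 0 1) volume)
    (h_ae : ∀ᵐ x ∂(volume.restrict (Set.Ioo (0:ℝ) 1)),
      Tendsto (fun ε => truncHilbert f ε x) (nhdsWithin 0 (Set.Ioi 0)) (nhds (Hf x)))
    (h_L3conv : Tendsto
      (fun ε => ∫ x in Set.Ioo (0:ℝ) 1, |truncHilbert f ε x - Hf x| ^ (3:ℕ) * (x * (1 - x)))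
      (nhdsWithin 0 (Set.Ioi 0)) (nhds 0)) :
    (∫ x₁ in Set.Ioo (0:ℝ) 1, ∫ x₂ in Set.Ioo (0:ℝ) 1,
        ((x₁ ^ (n + 1) - x₂ ^ (n + 1)) / (x₁ - x₂)
          - (x₁ ^ n - x₂ ^ n) / (x₁ - x₂)) * f x₁ * f x₂)
      = -2 * ∫ x in Set.Ioo (0:ℝ) 1, x ^ (n - 1) * Hf x * f x * (x * (1 - x)) :=
  stmt_11_general f Hf n hn hf_meas hf_int hf_L3 hHf_L3 h_ae h_L3conv
end
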